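/- arXiv:2402.17067 — 2 statements merged into one kernel-verified Lean document; each statement's English description precedes it below -/
import Mathlib

section
/- Fix α > 0 and η > 0, and let (α_i)_{i≥ℓ} be a sequence of positive reals satisfying 1/α_{i+1} ≤ (1+α_i η)/(α_i (1+αη)²) + η/(1+αη) for all i ≥ ℓ. If α_ℓ ≥ α, then α_i ≥ α for all i ≥ ℓ; if α_ℓ < α, then α_i ≥ α_ℓ for all i ≥ ℓ. In either case α_i ≥ min{α, α_ℓ} for all i ≥ ℓ. -/
/-!
The right-hand side of the recursion is decreasing both in `α_i` and in `α`. For any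
`0 < β ≤ α` it therefore stays below its value at `α_i = α = β`, and by the identity
`(1 + βη)/(β(1 + βη)²) + η/(1 + βη) = 1/β` that value is `1/β`. So `β ≤ α_i` forces
`β ≤ α_{i+1}`, and induction with `β = min α α_ℓ` (or `α`, or `α_ℓ`) gives the bounds.
-/

lemma one_add_mul_div_mul_sq_add_div_eq_one_div {β η : ℝ} (hβ : 0 < β) (hη : 0 ≤ η) :
    (1 + β * η) / (β * (1 + β * η) ^ 2) + η / (1 + β * η) = 1 / β := by
  have : 0 < 1 + β * η := by positivity
  field_simp

lemma one_add_mul_div_mul_sq_add_div_le_one_div {α β η x : ℝ} (hβ : 0 < β) (hβα : β ≤ α)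
    (hη : 0 ≤ η) (hβx : β ≤ x) :
    (1 + x * η) / (x * (1 + α * η) ^ 2) + η / (1 + α * η) ≤ 1 / β := by
  have hx : 0 < x := hβ.trans_le hβx
  have hden : 1 + β * η ≤ 1 + α * η := by gcongr
  calc (1 + x * η) / (x * (1 + α * η) ^ 2) + η / (1 + α * η)
      = (1 / x + η) / (1 + α * η) ^ 2 + η / (1 + α * η) := by field_simp
    _ ≤ (1 / β + η) / (1 + β * η) ^ 2 + η / (1 + β * η) := by gcongr
    _ = (1 + β * η) / (β * (1 + β * η) ^ 2) + η / (1 + β * η) := by field_simp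
    _ = 1 / β := one_add_mul_div_mul_sq_add_div_eq_one_div hβ hη

lemma le_of_le_of_recursion {α β η : ℝ} (hβ : 0 < β) (hβα : β ≤ α) (hη : 0 ≤ η)
    {ℓ : ℕ} {a : ℕ → ℝ} (ha : ∀ i, 0 < a i)
    (hrec : ∀ i, ℓ ≤ i →
      1 / a (i + 1) ≤ (1 + a i * η) / (a i * (1 + α * η) ^ 2) + η / (1 + α * η))
    (hβℓ : β ≤ a ℓ) {i : ℕ} (hi : ℓ ≤ i) : β ≤ a i := by
  induction i, hi using Nat.le_induction with
  | base => exact hβℓ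
  | succ n hn ih =>
    exact le_of_one_div_le_one_div (ha (n + 1))
      ((hrec n hn).trans (one_add_mul_div_mul_sq_add_div_le_one_div hβ hβα hη ih))

/-- evolution of the Φ-Sobolev constant along the Proximal Sampler.
Fix `α > 0`, `η > 0`, and a sequence of positive reals `(α_i)_{i ≥ ℓ}` satisfying
`1/α_{i+1} ≤ (1 + α_i η)/(α_i (1+αη)²) + η/(1+αη)` for all `i ≥ ℓ`.
If `α_ℓ ≥ α` then `α_i ≥ α` for all `i ≥ ℓ`; if `α_ℓ < α` then `α_i ≥ α_ℓ` for all
`i ≥ ℓ`. In either case `α_i ≥ min α α_ℓ` for all `i ≥ ℓ`. -/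
theorem proximal_sampler_phi_sobolev_recursion
    (α η : ℝ) (hα : 0 < α) (hη : 0 < η)
    (ℓ : ℕ) (a : ℕ → ℝ) (ha : ∀ i, 0 < a i)
    (hrec : ∀ i, ℓ ≤ i →
      1 / a (i + 1) ≤ (1 + a i * η) / (a i * (1 + α * η) ^ 2) + η / (1 + α * η)) :
    (α ≤ a ℓ → ∀ i, ℓ ≤ i → α ≤ a i) ∧
    (a ℓ < α → ∀ i, ℓ ≤ i → a ℓ ≤ a i) ∧
    (∀ i, ℓ ≤ i → min α (a ℓ) ≤ a i) :=
  ⟨fun h _ => le_of_le_of_recursion hα le_rfl hη.le ha hrec h,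
    fun h _ => le_of_le_of_recursion (ha ℓ) h.le hη.le ha hrec le_rfl,
    fun _ => le_of_le_of_recursion (lt_min hα (ha ℓ)) (min_le_left _ _) hη.le ha hrec
      (min_le_right _ _)⟩
end

section
/- Let α > 0, T > 0, α₀ > 0, and for t ∈ [0,T] define A_t = ∫₀^t [α₀(1+αT)²] / [(1+α(T−s))² + α₀ s (1+α(T−s))(1+αT)] ds. Then A_t = log[((1+αT)(1+α₀t) − αt) / (1+αT−αt)]. Consequently e^{−A_t} = (1+αT−αt)/((1+αT)(1+α₀t)−αt). -/
open Real Set intervalIntegral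

/-!
The denominator factors as `u s * v s` with the affine functions `u s = 1 + α T - α s` and
`v s = (1 + α T)(1 + α₀ s) - α s`, and the numerator `α₀ (1 + α T)²` is their Wronskian
`u v' - u' v` (constant, as for any two affine functions). Hence the integrand is the logarithmic
derivative of `v / u`, which equals `1` at `s = 0` and stays positive on `[0, T]`.
-/

theorem hasDerivAt_log_div_affine {p q r w s : ℝ} (hu : 0 < p + q * s) (hv : 0 < r + w * s) :
    HasDerivAt (fun x => log ((r + w * x) / (p + q * x)))
      ((p * w - q * r) / ((p + q * s) * (r + w * s))) s := by
  have hu' : HasDerivAt (fun x => p + q * x) q s := by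
    simpa using ((hasDerivAt_id s).const_mul q).const_add p
  have hv' : HasDerivAt (fun x => r + w * x) w s := by
    simpa using ((hasDerivAt_id s).const_mul w).const_add r
  refine ((hv'.div hu' hu.ne').log (div_pos hv hu).ne').congr_deriv ?_
  simp only [Pi.div_apply]
  field_simp
  ring

theorem integral_div_mul_affine {p q r w a b : ℝ}
    (hu : ∀ s ∈ uIcc a b, 0 < p + q * s) (hv : ∀ s ∈ uIcc a b, 0 < r + w * s) :
    ∫ s in a..b, (p * w - q * r) / ((p + q * s) * (r + w * s)) =
      log ((r + w * b) / (p + q * b)) - log ((r + w * a) / (p + q * a)) := by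
  refine integral_eq_sub_of_hasDerivAt (fun s hs => hasDerivAt_log_div_affine (hu s hs) (hv s hs))
    (ContinuousOn.intervalIntegrable ?_)
  exact continuousOn_const.div (by fun_prop) fun s hs => (mul_pos (hu s hs) (hv s hs)).ne'

theorem backward_heat_flow_gronwall_integral_general
    (α T α₀ : ℝ) (hα : 0 < α) (hα₀ : 0 < α₀)
    (t : ℝ) (ht0 : 0 ≤ t) (htT : t ≤ T) :
    (∫ s in (0 : ℝ)..t,
        α₀ * (1 + α * T) ^ 2 /
          ((1 + α * (T - s)) ^ 2 + α₀ * s * (1 + α * (T - s)) * (1 + α * T)))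
      = Real.log (((1 + α * T) * (1 + α₀ * t) - α * t) / (1 + α * T - α * t)) ∧
    Real.exp (-(∫ s in (0 : ℝ)..t,
        α₀ * (1 + α * T) ^ 2 /
          ((1 + α * (T - s)) ^ 2 + α₀ * s * (1 + α * (T - s)) * (1 + α * T))))
      = (1 + α * T - α * t) / ((1 + α * T) * (1 + α₀ * t) - α * t) := by
  have hc : 0 < 1 + α * T := by nlinarith
  have hu : ∀ s ∈ uIcc 0 t, 0 < 1 + α * T + -α * s := by
    intro s hs
    rw [uIcc_of_le ht0] at hs
    nlinarith [mul_nonneg hα.le (sub_nonneg.2 (hs.2.trans htT))]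
  have hv : ∀ s ∈ uIcc 0 t, 0 < 1 + α * T + (α₀ * (1 + α * T) - α) * s := by
    intro s hs
    have hus := hu s hs
    rw [uIcc_of_le ht0] at hs
    nlinarith [mul_nonneg (mul_nonneg hα₀.le hs.1) hc.le]
  have hA : ∫ s in (0 : ℝ)..t, α₀ * (1 + α * T) ^ 2 /
        ((1 + α * (T - s)) ^ 2 + α₀ * s * (1 + α * (T - s)) * (1 + α * T)) =
      log (((1 + α * T) * (1 + α₀ * t) - α * t) / (1 + α * T - α * t)) := by
    have wronskian : ∀ s : ℝ, α₀ * (1 + α * T) ^ 2 /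
          ((1 + α * (T - s)) ^ 2 + α₀ * s * (1 + α * (T - s)) * (1 + α * T)) =
        ((1 + α * T) * (α₀ * (1 + α * T) - α) - (-α) * (1 + α * T)) /
          ((1 + α * T + -α * s) * (1 + α * T + (α₀ * (1 + α * T) - α) * s)) := by
      intro s; ring
    simp_rw [wronskian, integral_div_mul_affine hu hv, mul_zero, add_zero, div_self hc.ne',
      log_one, sub_zero]
    congr 2 <;> ring
  refine ⟨hA, ?_⟩
  have hut := hu t right_mem_uIcc
  have hvt := hv t right_mem_uIcc
  rw [hA, exp_neg, exp_log (div_pos (by linarith) (by linarith)), inv_div]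

/-- the Grönwall integral along the backward heat flow step of the
Proximal Sampler. For `α, T, α₀ > 0` and `t ∈ [0,T]`, with
`A t = ∫₀^t α₀(1+αT)² / ((1+α(T−s))² + α₀ s (1+α(T−s))(1+αT)) ds`, we have
`A t = log (((1+αT)(1+α₀t) − αt)/(1+αT−αt))` and consequently
`exp (−A t) = (1+αT−αt)/((1+αT)(1+α₀t)−αt)`. -/
theorem backward_heat_flow_gronwall_integral
    (α T α₀ : ℝ) (hα : 0 < α) (hT : 0 < T) (hα₀ : 0 < α₀)
    (t : ℝ) (ht0 : 0 ≤ t) (htT : t ≤ T) :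
    (∫ s in (0 : ℝ)..t,
        α₀ * (1 + α * T) ^ 2 /
          ((1 + α * (T - s)) ^ 2 + α₀ * s * (1 + α * (T - s)) * (1 + α * T)))
      = Real.log (((1 + α * T) * (1 + α₀ * t) - α * t) / (1 + α * T - α * t)) ∧
    Real.exp (-(∫ s in (0 : ℝ)..t,
        α₀ * (1 + α * T) ^ 2 /
          ((1 + α * (T - s)) ^ 2 + α₀ * s * (1 + α * (T - s)) * (1 + α * T))))
      = (1 + α * T - α * t) / ((1 + α * T) * (1 + α₀ * t) - α * t) :=
  backward_heat_flow_gronwall_integral_general α T α₀ hα hα₀ t ht0 htT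
end
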